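/- arXiv:2409.14809 — 6 statements merged into one kernel-verified Lean document; each statement's English description precedes it below -/
import Mathlib

section
/- Let (Ω, F, ℙ, σ) be an ergodic measure-preserving system and φ ∈ L¹(Ω, ℝ). If there exists c > 0 such that the set Ω*_c = {ω : S_n φ(ω) > c for all n ≥ 1} has positive ℙ-measure, then ∫ φ dℙ > 0. -/
/-!
Let `F n x` be the Birkhoff sum of `φ` along the orbit of `x` up to its first return to `B`,
truncated after `n` terms, and `D n` the set of points whose orbit avoids `B` at times `0, …, n`.
Since `F (n + 1) = φ + (𝟙_Bᶜ F n) ∘ σ` and `σ` preserves `μ`, one gets the Kac-type identity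
`∫ φ = ∫_B F (n + 1) + ∫_{D n} φ ∘ σ^n`. If every Birkhoff sum starting in `B` exceeds `c`, then
so does `F (n + 1)` on `B`. By ergodicity `μ (D n) → 0`, and since the functions `φ ∘ σ^n` are
identically distributed, hence uniformly integrable, the last term tends to `0`. Thus
`∫ φ ≥ c μ(B) > 0`.
-/

open MeasureTheory Filter Set Topology ProbabilityTheory

section

variable {α : Type*} {σ : α → α} {B : Set α} {φ : α → ℝ}

/-- `excursionSum σ B φ n x` sums `φ` along the orbit of `x` up to (excluding) its first return
to `B` at a positive time, and over at most `n` terms. -/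
noncomputable def excursionSum (σ : α → α) (B : Set α) (φ : α → ℝ) : ℕ → α → ℝ
  | 0 => 0
  | n + 1 => fun x => φ x + Bᶜ.indicator (excursionSum σ B φ n) (σ x)

def avoidSet (σ : α → α) (B : Set α) (n : ℕ) : Set α := {x | ∀ j ≤ n, σ^[j] x ∉ B}

theorem avoidSet_zero : avoidSet σ B 0 = Bᶜ := by
  ext x
  simp [avoidSet]

theorem avoidSet_succ (n : ℕ) : avoidSet σ B (n + 1) = Bᶜ ∩ σ ⁻¹' avoidSet σ B n := by
  ext x
  constructor
  · intro h
    exact ⟨h 0 (n + 1).zero_le, fun j hj => h (j + 1) (by omega)⟩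
  · rintro ⟨h0, h⟩ (_ | j) hj
    exacts [h0, h j (by omega)]

theorem antitone_avoidSet : Antitone (avoidSet σ B) :=
  fun _ _ hmn _ hx j hj => hx j (hj.trans hmn)

theorem exists_excursionSum_eq_birkhoffSum (n : ℕ) (x : α) :
    ∃ m, 0 < m ∧ excursionSum σ B φ (n + 1) x = birkhoffSum σ φ m x := by
  induction n generalizing x with
  | zero => exact ⟨1, one_pos, by simp [excursionSum, birkhoffSum_one]⟩
  | succ n ih =>
    by_cases hx : σ x ∈ B
    · exact ⟨1, one_pos, by simp [excursionSum, hx, birkhoffSum_one]⟩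
    · obtain ⟨m, -, hm⟩ := ih (σ x)
      refine ⟨m + 1, m.succ_pos, ?_⟩
      rw [birkhoffSum_succ', ← hm]
      simp [excursionSum, hx]

theorem indicator_compl_excursionSum_sub (n : ℕ) :
    Bᶜ.indicator (excursionSum σ B φ (n + 1) - excursionSum σ B φ n) =
      (avoidSet σ B n).indicator (fun x => φ (σ^[n] x)) := by
  induction n with
  | zero =>
    ext x
    simp [excursionSum, avoidSet_zero]
  | succ n ih =>
    have hstep : excursionSum σ B φ (n + 2) - excursionSum σ B φ (n + 1) =
        (σ ⁻¹' avoidSet σ B n).indicator (fun x => φ (σ^[n + 1] x)) := by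
      ext x
      change _ = (σ ⁻¹' _).indicator ((fun y => φ (σ^[n] y)) ∘ σ) x
      rw [indicator_comp_right, ← ih, indicator_sub']
      simp only [excursionSum, Pi.sub_apply, add_sub_add_left_eq_sub]
    rw [hstep, avoidSet_succ, indicator_indicator]

variable [MeasurableSpace α] {μ : Measure α}

theorem measurableSet_avoidSet (hσ : Measurable σ) (hB : MeasurableSet B) (n : ℕ) :
    MeasurableSet (avoidSet σ B n) := by
  induction n with
  | zero => simpa [avoidSet_zero] using hB.compl
  | succ n ih => simpa [avoidSet_succ] using hB.compl.inter (hσ ih)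

theorem integrable_excursionSum (hσ : MeasurePreserving σ μ μ) (hφ : Integrable φ μ)
    (hB : MeasurableSet B) (n : ℕ) : Integrable (excursionSum σ B φ n) μ := by
  induction n with
  | zero => exact integrable_zero _ _ _
  | succ n ih => exact hφ.add (hσ.integrable_comp_of_integrable (ih.indicator hB.compl))

theorem integral_excursionSum_succ (hσ : MeasurePreserving σ μ μ) (hφ : Integrable φ μ)
    (hB : MeasurableSet B) (n : ℕ) :
    ∫ x, excursionSum σ B φ (n + 1) x ∂μ =
      ∫ x, φ x ∂μ + ∫ x in Bᶜ, excursionSum σ B φ n x ∂μ := by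
  have hF := (integrable_excursionSum hσ hφ hB n).indicator hB.compl
  have hcomp := integral_map hσ.measurable.aemeasurable (hσ.map_eq ▸ hF.aestronglyMeasurable)
  rw [hσ.map_eq] at hcomp
  exact (integral_add hφ (hσ.integrable_comp_of_integrable hF)).trans
    (by rw [Function.comp_def, ← hcomp, integral_indicator hB.compl])

theorem integral_eq_setIntegral_excursionSum_add (hσ : MeasurePreserving σ μ μ)
    (hφ : Integrable φ μ) (hB : MeasurableSet B) (n : ℕ) :
    ∫ x, φ x ∂μ = ∫ x in B, excursionSum σ B φ (n + 1) x ∂μ +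
      ∫ x in avoidSet σ B n, φ (σ^[n] x) ∂μ := by
  have hF := integrable_excursionSum hσ hφ hB
  have hsucc := integral_excursionSum_succ hσ hφ hB n
  rw [← integral_add_compl hB (hF (n + 1))] at hsucc
  rw [← integral_indicator (measurableSet_avoidSet hσ.measurable hB n),
    ← indicator_compl_excursionSum_sub, integral_indicator hB.compl, Pi.sub_def,
    integral_sub (hF _).integrableOn (hF _).integrableOn]
  linarith

theorem Ergodic.tendsto_measure_avoidSet [IsFiniteMeasure μ] (hσ : Ergodic σ μ)
    (hB : MeasurableSet B) (hB0 : μ B ≠ 0) :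
    Tendsto (fun n => μ (avoidSet σ B n)) atTop (𝓝 0) := by
  have hmeas := measurableSet_avoidSet hσ.measurable hB
  have hinv : ⋂ n, avoidSet σ B n ⊆ σ ⁻¹' ⋂ n, avoidSet σ B n := by
    intro x hx
    simp only [mem_iInter, mem_preimage] at hx ⊢
    intro n
    exact (avoidSet_succ n ▸ hx (n + 1)).2
  have hnull : μ (⋂ n, avoidSet σ B n) = 0 := by
    rcases hσ.ae_empty_or_univ_of_ae_le_preimage (MeasurableSet.iInter hmeas).nullMeasurableSet
      hinv.eventuallyLE with h | h
    · exact ae_eq_empty.mp h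
    · refine absurd (measure_mono_null ?_ (ae_eq_univ.mp h)) hB0
      intro x hxB hx
      exact (avoidSet_zero (σ := σ) ▸ mem_iInter.mp hx 0) hxB
  exact hnull ▸ tendsto_measure_iInter_atTop (fun n => (hmeas n).nullMeasurableSet)
    antitone_avoidSet ⟨0, measure_ne_top μ _⟩

theorem MeasureTheory.MeasurePreserving.tendsto_setIntegral_comp_iterate [IsFiniteMeasure μ]
    (hσ : MeasurePreserving σ μ μ) (hφ : Integrable φ μ) {s : ℕ → Set α}
    (hs : ∀ n, MeasurableSet (s n)) (hs0 : Tendsto (fun n => μ (s n)) atTop (𝓝 0)) :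
    Tendsto (fun n => ∫ x in s n, φ (σ^[n] x) ∂μ) atTop (𝓝 0) := by
  have hident (n : ℕ) : IdentDistrib (φ ∘ σ^[n]) (φ ∘ σ^[0]) μ μ := by
    have hid : IdentDistrib (σ^[n]) id μ μ :=
      ⟨(hσ.iterate n).measurable.aemeasurable, aemeasurable_id,
        by rw [(hσ.iterate n).map_eq, Measure.map_id]⟩
    exact hid.comp_of_aemeasurable (by rw [(hσ.iterate n).map_eq]; exact hφ.aemeasurable)
  have hUI : UnifIntegrable (fun n => φ ∘ σ^[n]) 1 μ :=
    (MemLp.uniformIntegrable_of_identDistrib le_rfl ENNReal.one_ne_top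
      (memLp_one_iff_integrable.2 hφ) hident).2.1
  rw [Metric.tendsto_nhds]
  intro ε hε
  obtain ⟨δ, hδ, hδs⟩ := hUI (half_pos hε)
  filter_upwards [hs0.eventually (eventually_le_nhds (ENNReal.ofReal_pos.2 hδ))] with n hn
  have hle : ‖∫ x, (s n).indicator (φ ∘ σ^[n]) x ∂μ‖ₑ ≤ ENNReal.ofReal (ε / 2) :=
    (enorm_integral_le_lintegral_enorm _).trans
      (by rw [← eLpNorm_one_eq_lintegral_enorm]; exact hδs n (s n) (hs n) hn)
  rw [← ofReal_norm, ENNReal.ofReal_le_ofReal_iff (half_pos hε).le,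
    integral_indicator (hs n)] at hle
  rw [dist_zero_right]
  exact hle.trans_lt (half_lt_self hε)

theorem Ergodic.mul_measureReal_le_integral_of_le_birkhoffSum [IsFiniteMeasure μ]
    (hσ : Ergodic σ μ) (hφ : Integrable φ μ) (hB : MeasurableSet B) (hB0 : μ B ≠ 0) {c : ℝ}
    (hc : ∀ x ∈ B, ∀ n, 0 < n → c ≤ birkhoffSum σ φ n x) :
    c * μ.real B ≤ ∫ x, φ x ∂μ := by
  have hmp := hσ.toMeasurePreserving
  have htail := hmp.tendsto_setIntegral_comp_iterate hφ (measurableSet_avoidSet hmp.measurable hB)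
    (hσ.tendsto_measure_avoidSet hB hB0)
  refine ge_of_tendsto (by simpa using htail.const_sub (∫ x, φ x ∂μ))
    (Eventually.of_forall fun n => ?_)
  rw [integral_eq_setIntegral_excursionSum_add hmp hφ hB n, add_sub_cancel_right]
  calc c * μ.real B = ∫ _ in B, c ∂μ := by simp [mul_comm]
    _ ≤ ∫ x in B, excursionSum σ B φ (n + 1) x ∂μ := by
      refine setIntegral_mono_on (integrableOn_const (measure_ne_top μ B))
        (integrable_excursionSum hmp hφ hB _).integrableOn hB fun x hx => ?_
      obtain ⟨m, hm, hsum⟩ := exists_excursionSum_eq_birkhoffSum (σ := σ) (B := B) (φ := φ) n x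
      exact hsum ▸ hc x hx m hm

end

/-- If for some `c > 0` the set of points whose Birkhoff sums all
exceed `c` (for every `n ≥ 1`) has positive measure, then the mean of `φ` is positive. -/
theorem stmt_2 {Ω : Type*} [MeasurableSpace Ω] (μ : Measure Ω) [IsProbabilityMeasure μ]
    (σ : Ω → Ω) (hσ : Ergodic σ μ) (φ : Ω → ℝ) (hφ : Integrable φ μ)
    (c : ℝ) (hc : 0 < c)
    (hpos : 0 < μ {ω | ∀ n : ℕ, 1 ≤ n → c < ∑ k ∈ Finset.range n, φ (σ^[k] ω)}) :
    0 < ∫ ω, φ ω ∂μ := by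
  have hbirkhoff (n : ℕ) : AEMeasurable (birkhoffSum σ φ n) μ :=
    Finset.aemeasurable_fun_sum _ fun k _ =>
      hφ.aemeasurable.comp_quasiMeasurePreserving (hσ.quasiMeasurePreserving.iterate k)
  have hnull : NullMeasurableSet {ω | ∀ n : ℕ, 1 ≤ n → c < birkhoffSum σ φ n ω} μ := by
    simp only [ofPred_forall]
    exact .iInter fun n => .iInter fun _ => nullMeasurableSet_lt aemeasurable_const (hbirkhoff n)
  obtain ⟨B, hBsub, hB, hBae⟩ := hnull.exists_measurable_subset_ae_eq
  have hB0 : 0 < μ B := (measure_congr hBae).symm ▸ hpos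
  calc 0 < c * μ.real B := mul_pos hc (ENNReal.toReal_pos hB0.ne' (measure_ne_top μ B))
    _ ≤ ∫ ω, φ ω ∂μ := hσ.mul_measureReal_le_integral_of_le_birkhoffSum hφ hB hB0.ne'
        fun x hx n hn => (hBsub hx n hn).le
end

section
/- Let K : Ω → (0, ∞) be a tempered random variable over an invertible measure-preserving system (Ω, ℙ, σ), i.e. lim_{n→±∞} (1/n) log K(σ^n ω) = 0 for ℙ-a.e. ω. Then for each ε > 0 there exists a random variable K_ε : Ω → (0, ∞) such that K(ω) ≤ K_ε(ω) and K_ε(σ^n ω) ≤ K_ε(ω) e^{ε|n|} for ℙ-a.e. ω ∈ Ω and all n ∈ ℤ. -/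
/- The envelope is `K_ε(ω) = sup_n K(σⁿ ω) e^{-ε|n|}`. Temperedness says `log K(σⁿ ω) < ε|n|`
for all but finitely many `n`, so the supremum is finite and dominates `K(ω)` (take `n = 0`);
the triangle inequality `|n + m| ≤ |n| + |m|` turns the shift `ω ↦ σᵐ ω` of the orbit into a loss
of at most a factor `e^{ε|m|}`. -/

open MeasureTheory Filter

/-- The `n`-th iterate (`n ∈ ℤ`) of an invertible transformation. -/
noncomputable def zIter {Ω : Type*} [MeasurableSpace Ω] (σ : Ω ≃ᵐ Ω) (n : ℤ) (ω : Ω) : Ω :=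
  if 0 ≤ n then σ^[n.toNat] ω else σ.symm^[(-n).toNat] ω

/-- `K : Ω → (0,∞)` is tempered: `(1/n) log K(σⁿ ω) → 0` as `n → ±∞`, a.s. -/
def TemperedZ {Ω : Type*} [MeasurableSpace Ω] (μ : Measure Ω) (σ : Ω ≃ᵐ Ω)
    (K : Ω → ℝ) : Prop :=
  ∀ᵐ ω ∂μ,
    Tendsto (fun n : ℤ => Real.log (K (zIter σ n ω)) / (n : ℝ)) atTop (nhds 0) ∧
    Tendsto (fun n : ℤ => Real.log (K (zIter σ n ω)) / (n : ℝ)) atBot (nhds 0)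

section zIter

variable {Ω : Type*} [MeasurableSpace Ω] (σ : Ω ≃ᵐ Ω)

lemma zIter_eq_zpow_apply (n : ℤ) (ω : Ω) : zIter σ n ω = (σ.toEquiv ^ n) ω := by
  unfold zIter
  split_ifs with hn
  · rw [← Int.toNat_of_nonneg hn, zpow_natCast, ← Equiv.Perm.iterate_eq_pow]
    rfl
  · obtain ⟨k, rfl⟩ : ∃ k : ℕ, n = -k := ⟨(-n).toNat, by omega⟩
    rw [zpow_neg, zpow_natCast, ← inv_pow, ← Equiv.Perm.iterate_eq_pow]
    simp [Equiv.Perm.inv_def]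

lemma zIter_add (m n : ℤ) (ω : Ω) : zIter σ (m + n) ω = zIter σ m (zIter σ n ω) := by
  simp only [zIter_eq_zpow_apply, zpow_add, Equiv.Perm.mul_apply]

@[simp]
lemma zIter_zero (ω : Ω) : zIter σ 0 ω = ω := by simp [zIter]

end zIter

/-- Junk value `0` when the family is unbounded above; hence the `max` with `K` in `stmt_3`. -/
noncomputable def expWeightedSup (ε : ℝ) (a : ℤ → ℝ) : ℝ :=
  ⨆ n : ℤ, a n * Real.exp (-(ε * |(n : ℝ)|))

section expWeightedSup

variable {ε : ℝ} {a : ℤ → ℝ}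

lemma bddAbove_range_mul_exp_neg_abs_of_tendsto_log_div (hε : 0 < ε) (ha : ∀ n, 0 < a n)
    (htop : Tendsto (fun n : ℤ => Real.log (a n) / n) atTop (nhds 0))
    (hbot : Tendsto (fun n : ℤ => Real.log (a n) / n) atBot (nhds 0)) :
    BddAbove (Set.range fun n : ℤ => a n * Real.exp (-(ε * |(n : ℝ)|))) := by
  have hcof : Tendsto (fun n : ℤ => Real.log (a n) / n) cofinite (nhds 0) := by
    rw [Int.cofinite_eq]
    exact hbot.sup htop
  refine IsBoundedUnder.bddAbove_range_of_cofinite (isBoundedUnder_of_eventually_le (a := 1) ?_)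
  filter_upwards [hcof.eventually (Metric.ball_mem_nhds 0 hε), eventually_cofinite_ne 0]
    with n hsmall hn
  have hn' : (0 : ℝ) < |(n : ℝ)| := abs_pos.2 (Int.cast_ne_zero.2 hn)
  rw [dist_zero_right, Real.norm_eq_abs, abs_div, div_lt_iff₀ hn'] at hsmall
  have hlog : Real.log (a n) ≤ ε * |(n : ℝ)| := (le_abs_self _).trans hsmall.le
  calc a n * Real.exp (-(ε * |(n : ℝ)|))
      = Real.exp (Real.log (a n) - ε * |(n : ℝ)|) := by
        rw [Real.exp_sub, Real.exp_log (ha n), Real.exp_neg, div_eq_mul_inv]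
    _ ≤ 1 := Real.exp_le_one_iff.2 (by linarith)

lemma apply_le_expWeightedSup
    (hbdd : BddAbove (Set.range fun n : ℤ => a n * Real.exp (-(ε * |(n : ℝ)|)))) :
    a 0 ≤ expWeightedSup ε a := by
  simpa [expWeightedSup] using le_ciSup hbdd 0

lemma mul_exp_neg_abs_le_expWeightedSup_mul (hε : 0 ≤ ε) (ha : ∀ n, 0 ≤ a n)
    (hbdd : BddAbove (Set.range fun n : ℤ => a n * Real.exp (-(ε * |(n : ℝ)|)))) (m n : ℤ) :
    a (n + m) * Real.exp (-(ε * |(n : ℝ)|)) ≤ expWeightedSup ε a * Real.exp (ε * |(m : ℝ)|) := by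
  have hweight : Real.exp (-(ε * |(n : ℝ)|))
      ≤ Real.exp (-(ε * |((n + m : ℤ) : ℝ)|)) * Real.exp (ε * |(m : ℝ)|) := by
    rw [← Real.exp_add, Real.exp_le_exp, Int.cast_add]
    nlinarith [abs_add_le (n : ℝ) m]
  calc a (n + m) * Real.exp (-(ε * |(n : ℝ)|))
      ≤ a (n + m) * Real.exp (-(ε * |((n + m : ℤ) : ℝ)|)) * Real.exp (ε * |(m : ℝ)|) := by
        rw [mul_assoc]
        exact mul_le_mul_of_nonneg_left hweight (ha _)
    _ ≤ expWeightedSup ε a * Real.exp (ε * |(m : ℝ)|) := by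
        gcongr
        exact le_ciSup hbdd (n + m)

lemma expWeightedSup_shift_le (hε : 0 ≤ ε) (ha : ∀ n, 0 ≤ a n)
    (hbdd : BddAbove (Set.range fun n : ℤ => a n * Real.exp (-(ε * |(n : ℝ)|)))) (m : ℤ) :
    expWeightedSup ε (fun n => a (n + m)) ≤ expWeightedSup ε a * Real.exp (ε * |(m : ℝ)|) :=
  ciSup_le (mul_exp_neg_abs_le_expWeightedSup_mul hε ha hbdd m)

end expWeightedSup

theorem stmt_3_general {Ω : Type*} [MeasurableSpace Ω] (μ : Measure Ω)
    (σ : Ω ≃ᵐ Ω)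
    (K : Ω → ℝ) (hKpos : ∀ ω, 0 < K ω)
    (hK : TemperedZ μ σ K) (ε : ℝ) (hε : 0 < ε) :
    ∃ Kε : Ω → ℝ, (∀ ω, 0 < Kε ω) ∧
      ∀ᵐ ω ∂μ, K ω ≤ Kε ω ∧
        ∀ n : ℤ, Kε (zIter σ n ω) ≤ Kε ω * Real.exp (ε * |(n : ℝ)|) := by
  set S : Ω → ℝ := fun ω => expWeightedSup ε fun n => K (zIter σ n ω)
  refine ⟨fun ω => max (K ω) (S ω), fun ω => lt_max_of_lt_left (hKpos ω), ?_⟩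
  filter_upwards [hK] with ω ⟨htop, hbot⟩
  have hbdd := bddAbove_range_mul_exp_neg_abs_of_tendsto_log_div hε (fun n => hKpos _) htop hbot
  have hKnonneg : ∀ n, 0 ≤ K (zIter σ n ω) := fun n => (hKpos _).le
  have hSle : S ω ≤ max (K ω) (S ω) := le_max_right _ _
  refine ⟨le_max_of_le_right (by simpa using apply_le_expWeightedSup hbdd), fun m => max_le ?_ ?_⟩
  · calc K (zIter σ m ω) ≤ S ω * Real.exp (ε * |(m : ℝ)|) := by
          simpa using mul_exp_neg_abs_le_expWeightedSup_mul hε.le hKnonneg hbdd m 0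
      _ ≤ max (K ω) (S ω) * Real.exp (ε * |(m : ℝ)|) := by gcongr
  · calc S (zIter σ m ω) ≤ S ω * Real.exp (ε * |(m : ℝ)|) := by
          simpa only [S, ← zIter_add] using expWeightedSup_shift_le hε.le hKnonneg hbdd m
      _ ≤ max (K ω) (S ω) * Real.exp (ε * |(m : ℝ)|) := by gcongr

/-- For a tempered random variable `K` over an invertible
measure-preserving system and any `ε > 0`, there is `K_ε ≥ K` with
`K_ε(σⁿ ω) ≤ K_ε(ω) e^{ε |n|}` for all `n ∈ ℤ`, almost surely. -/
theorem stmt_3 {Ω : Type*} [MeasurableSpace Ω] (μ : Measure Ω) [IsProbabilityMeasure μ]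
    (σ : Ω ≃ᵐ Ω) (hσ : MeasurePreserving σ μ μ)
    (K : Ω → ℝ) (hKmeas : Measurable K) (hKpos : ∀ ω, 0 < K ω)
    (hK : TemperedZ μ σ K) (ε : ℝ) (hε : 0 < ε) :
    ∃ Kε : Ω → ℝ, (∀ ω, 0 < Kε ω) ∧
      ∀ᵐ ω ∂μ, K ω ≤ Kε ω ∧
        ∀ n : ℤ, Kε (zIter σ n ω) ≤ Kε ω * Real.exp (ε * |(n : ℝ)|) :=
  stmt_3_general μ σ K hKpos hK ε hε
end

section
/- Suppose a linear cocycle A over an invertible ergodic system admits a tempered exponential dichotomy with tempered constant K and rate λ > 0. Then for every measurable g : Ω → X with esssup_ω K(ω)‖g(ω)‖ < ∞, the function f(ω) := Σ_{n=0}^∞ 𝒜(σ^{-n}ω, n) Π^s(σ^{-n}ω) g(σ^{-n}ω) − Σ_{n=1}^∞ 𝒜(σ^n ω, −n) Π^u(σ^n ω) g(σ^n ω) satisfies ‖f(ω)‖ ≤ ((1+e^{-λ})/(1−e^{-λ})) ‖g‖_{∞,K} for ℙ-a.e. ω, i.e. f ∈ L^∞(Ω,X). -/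
open MeasureTheory Filter

/-- `𝒜` is a linear cocycle over `σ`. -/
def IsCocycle {Ω X : Type*} [NormedAddCommGroup X] [NormedSpace ℝ X]
    (σ : Ω → Ω) (𝒜 : Ω → ℕ → X →L[ℝ] X) : Prop :=
  (∀ ω, 𝒜 ω 0 = ContinuousLinearMap.id ℝ X) ∧
    ∀ ω (m n : ℕ), 𝒜 ω (n + m) = (𝒜 (σ^[m] ω) n).comp (𝒜 ω m)

/-- A tempered exponential dichotomy for the cocycle `𝒜` over the invertible system
`σ`: measurable equivariant projections `P` (stable) with complement `Id - P`
(unstable), a backwards cocycle `B ω n` (the inverse `𝒜(ω, -n)` of `𝒜(σ^{-n}ω, n)`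
restricted to the unstable direction), a tempered random variable `K > 0` and a rate
`lam > 0` realizing the exponential bounds. -/
structure Dichotomy {Ω X : Type*} [MeasurableSpace Ω]
    [NormedAddCommGroup X] [NormedSpace ℝ X] [MeasurableSpace X] [BorelSpace X]
    (μ : Measure Ω) (σ : Ω ≃ᵐ Ω) (𝒜 : Ω → ℕ → X →L[ℝ] X) where
  P : Ω → X →L[ℝ] X
  B : Ω → ℕ → X →L[ℝ] X
  K : Ω → ℝ
  lam : ℝ
  lam_pos : 0 < lam
  K_pos : ∀ ω, 0 < K ω
  K_meas : Measurable K
  tempered_pos : ∀ᵐ ω ∂μ,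
    Tendsto (fun n : ℕ => Real.log (K (σ^[n] ω)) / (n : ℝ)) atTop (nhds 0)
  tempered_neg : ∀ᵐ ω ∂μ,
    Tendsto (fun n : ℕ => Real.log (K (σ.symm^[n] ω)) / (n : ℝ)) atTop (nhds 0)
  idem : ∀ ω, (P ω).comp (P ω) = P ω
  P_meas : ∀ x : X, Measurable fun ω => P ω x
  equivar : ∀ ω, (P (σ ω)).comp (𝒜 ω 1) = (𝒜 ω 1).comp (P ω)
  inv_right : ∀ ω (n : ℕ),
    (𝒜 (σ.symm^[n] ω) n).comp ((B ω n).comp (ContinuousLinearMap.id ℝ X - P ω)) =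
      ContinuousLinearMap.id ℝ X - P ω
  inv_left : ∀ ω (n : ℕ),
    (B ω n).comp ((𝒜 (σ.symm^[n] ω) n).comp
        (ContinuousLinearMap.id ℝ X - P (σ.symm^[n] ω))) =
      ContinuousLinearMap.id ℝ X - P (σ.symm^[n] ω)
  B_ker : ∀ ω (n : ℕ),
    (P (σ.symm^[n] ω)).comp ((B ω n).comp (ContinuousLinearMap.id ℝ X - P ω)) = 0
  bound_s : ∀ᵐ ω ∂μ, ∀ n : ℕ,
    ‖(𝒜 ω n).comp (P ω)‖ ≤ K ω * Real.exp (-lam * n)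
  bound_u : ∀ᵐ ω ∂μ, ∀ n : ℕ,
    ‖(B ω n).comp (ContinuousLinearMap.id ℝ X - P ω)‖ ≤ K ω * Real.exp (-lam * n)

/-- Under a tempered exponential dichotomy, for any `g` with
`esssup K(ω)‖g(ω)‖ ≤ M < ∞`, the function
`f(ω) = Σ_{n≥0} 𝒜(σ^{-n}ω,n) Πˢ(σ^{-n}ω) g(σ^{-n}ω) − Σ_{n≥1} 𝒜(σⁿω,−n) Πᵘ(σⁿω) g(σⁿω)`
satisfies `‖f(ω)‖ ≤ ((1+e^{-λ})/(1−e^{-λ})) M` almost everywhere. -/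
theorem stmt_6 {Ω X : Type*} [MeasurableSpace Ω]
    [NormedAddCommGroup X] [NormedSpace ℝ X] [CompleteSpace X]
    [MeasurableSpace X] [BorelSpace X]
    (μ : Measure Ω) [IsProbabilityMeasure μ] (σ : Ω ≃ᵐ Ω)
    (hσ : MeasurePreserving σ μ μ) (herg : Ergodic (⇑σ) μ)
    (𝒜 : Ω → ℕ → X →L[ℝ] X) (hcoc : IsCocycle (⇑σ) 𝒜)
    (D : Dichotomy μ σ 𝒜)
    (g : Ω → X) (hgmeas : Measurable g) (M : ℝ)
    (hgM : ∀ᵐ ω ∂μ, D.K ω * ‖g ω‖ ≤ M) :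
    ∀ᵐ ω ∂μ,
      ‖(∑' n : ℕ, 𝒜 (σ.symm^[n] ω) n (D.P (σ.symm^[n] ω) (g (σ.symm^[n] ω)))) -
          ∑' n : ℕ, D.B (σ^[n + 1] ω) (n + 1)
            ((ContinuousLinearMap.id ℝ X - D.P (σ^[n + 1] ω)) (g (σ^[n + 1] ω)))‖ ≤
        ((1 + Real.exp (-D.lam)) / (1 - Real.exp (-D.lam))) * M := by

  have hr0 : (0:ℝ) < Real.exp (-D.lam) := Real.exp_pos _
  have hr1 : Real.exp (-D.lam) < 1 := Real.exp_lt_one_iff.mpr (by linarith [D.lam_pos])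
  set r := Real.exp (-D.lam) with hrdef
  have hrne : (1:ℝ) - r ≠ 0 := by linarith
  have hM : 0 ≤ M := by
    obtain ⟨ω, hω⟩ := hgM.exists
    exact le_trans (mul_nonneg (D.K_pos ω).le (norm_nonneg _)) hω
  have hexp : ∀ n : ℕ, Real.exp (-D.lam * n) = r ^ n := by
    intro n; rw [hrdef, ← Real.exp_nat_mul]; ring_nf
  have hp : ∀ᵐ ω ∂μ,
      (∀ n : ℕ, ‖(𝒜 ω n).comp (D.P ω)‖ ≤ D.K ω * Real.exp (-D.lam * n)) ∧
      (∀ n : ℕ, ‖(D.B ω n).comp (ContinuousLinearMap.id ℝ X - D.P ω)‖ ≤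
        D.K ω * Real.exp (-D.lam * n)) ∧ D.K ω * ‖g ω‖ ≤ M :=
    D.bound_s.and (D.bound_u.and hgM)
  have hsymm : MeasurePreserving (⇑σ.symm) μ μ := hσ.symm σ
  have h1 : ∀ᵐ ω ∂μ, ∀ n : ℕ,
      (∀ m : ℕ, ‖(𝒜 (σ.symm^[n] ω) m).comp (D.P (σ.symm^[n] ω))‖ ≤
        D.K (σ.symm^[n] ω) * Real.exp (-D.lam * m)) ∧
      (∀ m : ℕ, ‖(D.B (σ.symm^[n] ω) m).comp
          (ContinuousLinearMap.id ℝ X - D.P (σ.symm^[n] ω))‖ ≤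
        D.K (σ.symm^[n] ω) * Real.exp (-D.lam * m)) ∧
      D.K (σ.symm^[n] ω) * ‖g (σ.symm^[n] ω)‖ ≤ M :=
    MeasureTheory.ae_all_iff.mpr fun n =>
      ((hsymm.iterate n).quasiMeasurePreserving.ae hp)
  have h2 : ∀ᵐ ω ∂μ, ∀ n : ℕ,
      (∀ m : ℕ, ‖(𝒜 (σ^[n] ω) m).comp (D.P (σ^[n] ω))‖ ≤
        D.K (σ^[n] ω) * Real.exp (-D.lam * m)) ∧
      (∀ m : ℕ, ‖(D.B (σ^[n] ω) m).comp
          (ContinuousLinearMap.id ℝ X - D.P (σ^[n] ω))‖ ≤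
        D.K (σ^[n] ω) * Real.exp (-D.lam * m)) ∧
      D.K (σ^[n] ω) * ‖g (σ^[n] ω)‖ ≤ M :=
    MeasureTheory.ae_all_iff.mpr fun n =>
      ((hσ.iterate n).quasiMeasurePreserving.ae hp)
  filter_upwards [h1, h2] with ω H1 H2
  set a : ℕ → X := fun n =>
    𝒜 (σ.symm^[n] ω) n (D.P (σ.symm^[n] ω) (g (σ.symm^[n] ω))) with ha_def
  set b : ℕ → X := fun n => D.B (σ^[n + 1] ω) (n + 1)
    ((ContinuousLinearMap.id ℝ X - D.P (σ^[n + 1] ω)) (g (σ^[n + 1] ω))) with hb_def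
  have ha : ∀ n : ℕ, ‖a n‖ ≤ M * r ^ n := by
    intro n
    have hop : ‖((𝒜 (σ.symm^[n] ω) n).comp (D.P (σ.symm^[n] ω)))
        (g (σ.symm^[n] ω))‖ ≤
        ‖(𝒜 (σ.symm^[n] ω) n).comp (D.P (σ.symm^[n] ω))‖ * ‖g (σ.symm^[n] ω)‖ :=
      ContinuousLinearMap.le_opNorm _ _
    have hb1 := (H1 n).1 n
    have hb2 := (H1 n).2.2
    have hKpos := (D.K_pos (σ.symm^[n] ω))
    calc ‖a n‖ ≤ ‖(𝒜 (σ.symm^[n] ω) n).comp (D.P (σ.symm^[n] ω))‖ *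
          ‖g (σ.symm^[n] ω)‖ := hop
      _ ≤ (D.K (σ.symm^[n] ω) * Real.exp (-D.lam * n)) * ‖g (σ.symm^[n] ω)‖ :=
          mul_le_mul_of_nonneg_right hb1 (norm_nonneg _)
      _ = r ^ n * (D.K (σ.symm^[n] ω) * ‖g (σ.symm^[n] ω)‖) := by
          rw [hexp n]; ring
      _ ≤ r ^ n * M := mul_le_mul_of_nonneg_left hb2 (pow_nonneg hr0.le n)
      _ = M * r ^ n := mul_comm _ _
  have hb : ∀ n : ℕ, ‖b n‖ ≤ (M * r) * r ^ n := by
    intro n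
    have hop : ‖((D.B (σ^[n+1] ω) (n+1)).comp
        (ContinuousLinearMap.id ℝ X - D.P (σ^[n+1] ω))) (g (σ^[n+1] ω))‖ ≤
        ‖(D.B (σ^[n+1] ω) (n+1)).comp
          (ContinuousLinearMap.id ℝ X - D.P (σ^[n+1] ω))‖ * ‖g (σ^[n+1] ω)‖ :=
      ContinuousLinearMap.le_opNorm _ _
    have hb1 := (H2 (n+1)).2.1 (n+1)
    have hb2 := (H2 (n+1)).2.2
    calc ‖b n‖ ≤ ‖(D.B (σ^[n+1] ω) (n+1)).comp
          (ContinuousLinearMap.id ℝ X - D.P (σ^[n+1] ω))‖ * ‖g (σ^[n+1] ω)‖ := hop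
      _ ≤ (D.K (σ^[n+1] ω) * Real.exp (-D.lam * ((n+1:ℕ):ℝ))) * ‖g (σ^[n+1] ω)‖ :=
          mul_le_mul_of_nonneg_right hb1 (norm_nonneg _)
      _ = r ^ (n+1) * (D.K (σ^[n+1] ω) * ‖g (σ^[n+1] ω)‖) := by
          rw [hexp (n+1)]; ring
      _ ≤ r ^ (n+1) * M := mul_le_mul_of_nonneg_left hb2 (pow_nonneg hr0.le _)
      _ = (M * r) * r ^ n := by rw [pow_succ]; ring
  have hs1 : ‖∑' n : ℕ, a n‖ ≤ M * (1 - r)⁻¹ :=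
    tsum_of_norm_bounded ((hasSum_geometric_of_lt_one hr0.le hr1).mul_left M) ha
  have hs2 : ‖∑' n : ℕ, b n‖ ≤ (M * r) * (1 - r)⁻¹ :=
    tsum_of_norm_bounded ((hasSum_geometric_of_lt_one hr0.le hr1).mul_left (M * r)) hb
  calc ‖(∑' n : ℕ, a n) - ∑' n : ℕ, b n‖ ≤ ‖∑' n : ℕ, a n‖ + ‖∑' n : ℕ, b n‖ :=
        norm_sub_le _ _
    _ ≤ M * (1 - r)⁻¹ + (M * r) * (1 - r)⁻¹ := add_le_add hs1 hs2
    _ = (1 + r) / (1 - r) * M := by field_simp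
end

section
/- Suppose a linear cocycle admits a tempered exponential dichotomy with constant K and rate λ > 0, and let f ∈ L^∞(Ω, X) satisfy f(ω) = A(σ^{-1}ω) f(σ^{-1}ω) for ℙ-a.e. ω. Then Π^s(ω) f(ω) = 0 for ℙ-a.e. ω ∈ Ω. -/
open MeasureTheory Filter

/-- If `f ∈ L^∞(Ω,X)` satisfies the invariance
`f(ω) = A(σ^{-1}ω) f(σ^{-1}ω)` a.e., then its stable part vanishes:
`Πˢ(ω) f(ω) = 0` a.e. -/
theorem stmt_7 {Ω X : Type*} [MeasurableSpace Ω]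
    [NormedAddCommGroup X] [NormedSpace ℝ X] [CompleteSpace X]
    [MeasurableSpace X] [BorelSpace X]
    (μ : Measure Ω) [IsProbabilityMeasure μ] (σ : Ω ≃ᵐ Ω)
    (hσ : MeasurePreserving σ μ μ) (herg : Ergodic (⇑σ) μ)
    (𝒜 : Ω → ℕ → X →L[ℝ] X) (hcoc : IsCocycle (⇑σ) 𝒜)
    (D : Dichotomy μ σ 𝒜)
    (f : Ω → X) (hfmeas : Measurable f) (Mf : ℝ)
    (hfbdd : ∀ᵐ ω ∂μ, ‖f ω‖ ≤ Mf)
    (hinv : ∀ᵐ ω ∂μ, f ω = 𝒜 (σ.symm ω) 1 (f (σ.symm ω))) :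
    ∀ᵐ ω ∂μ, D.P ω (f ω) = 0 := by

  obtain ⟨hid, hcc⟩ := hcoc
  -- n-step equivariance
  have equivar_n : ∀ (ω : Ω) (n : ℕ),
      (D.P (σ^[n] ω)).comp (𝒜 ω n) = (𝒜 ω n).comp (D.P ω) := by
    intro ω n
    induction n with
    | zero => simp [hid]
    | succ n ih =>
      have h1 : 𝒜 ω (n + 1) = (𝒜 (σ^[n] ω) 1).comp (𝒜 ω n) := by
        have := hcc ω n 1; rwa [Nat.add_comm 1 n] at this
      rw [h1, Function.iterate_succ_apply', ← ContinuousLinearMap.comp_assoc,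
        D.equivar (σ^[n] ω), ContinuousLinearMap.comp_assoc, ih,
        ← ContinuousLinearMap.comp_assoc]
  have hσs : MeasurePreserving (⇑σ.symm) μ μ := hσ.symm σ
  have hpull : ∀ {p : Ω → Prop}, (∀ᵐ ω ∂μ, p ω) →
      ∀ᵐ ω ∂μ, ∀ n : ℕ, p (σ.symm^[n] ω) := by
    intro p hp
    rw [MeasureTheory.ae_all_iff]
    intro n
    exact (hσs.iterate n).quasiMeasurePreserving.ae hp
  have H1 := hpull hinv
  have H2 := hpull hfbdd
  have H3 := hpull D.bound_s
  filter_upwards [H1, H2, H3, D.tempered_neg] with ω h1 h2 h3 h4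
  -- iterated invariance at ω
  have hiter : ∀ n : ℕ, f ω = 𝒜 (σ.symm^[n] ω) n (f (σ.symm^[n] ω)) := by
    intro n
    induction n with
    | zero => simp [hid]
    | succ n ih =>
      have hs : σ.symm^[n + 1] ω = σ.symm (σ.symm^[n] ω) :=
        Function.iterate_succ_apply' _ _ _
      have hσapp : σ (σ.symm^[n + 1] ω) = σ.symm^[n] ω := by
        rw [hs]; exact σ.apply_symm_apply _
      have h1n := h1 n
      rw [← hs] at h1n
      have hcomp : 𝒜 (σ.symm^[n + 1] ω) (n + 1)
          = (𝒜 (σ.symm^[n] ω) n).comp (𝒜 (σ.symm^[n + 1] ω) 1) := by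
        have := hcc (σ.symm^[n + 1] ω) 1 n
        rwa [Function.iterate_one, hσapp] at this
      rw [hcomp]
      rw [ih, h1n]
      rfl
  -- the bound for every n
  have hbound : ∀ n : ℕ, ‖D.P ω (f ω)‖ ≤
      D.K (σ.symm^[n] ω) * Real.exp (-D.lam * n) * Mf := by
    intro n
    set w := σ.symm^[n] ω with hw
    have hback : σ^[n] w = ω :=
      (Function.LeftInverse.iterate σ.apply_symm_apply n) ω
    have heq : D.P ω (f ω) = ((𝒜 w n).comp (D.P w)) (f w) := by
      conv_lhs => rw [hiter n]
      have := equivar_n w n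
      rw [hback] at this
      have := congrArg (fun (T : X →L[ℝ] X) => T (f w)) this
      simpa using this
    rw [heq]
    calc ‖((𝒜 w n).comp (D.P w)) (f w)‖
        ≤ ‖(𝒜 w n).comp (D.P w)‖ * ‖f w‖ := ContinuousLinearMap.le_opNorm _ _
      _ ≤ (D.K w * Real.exp (-D.lam * n)) * Mf := by
          exact mul_le_mul (h3 n n) (h2 n) (norm_nonneg _)
            (mul_nonneg (D.K_pos _).le (Real.exp_pos _).le)
  -- the bound tends to 0
  have hK : ∀ n : ℕ, 1 ≤ n → D.K (σ.symm^[n] ω) * Real.exp (-D.lam * n)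
      = Real.exp ((Real.log (D.K (σ.symm^[n] ω)) / n - D.lam) * n) := by
    intro n hn
    have hn' : (n : ℝ) ≠ 0 := Nat.cast_ne_zero.2 (by omega)
    have harg : (Real.log (D.K (σ.symm^[n] ω)) / n - D.lam) * n
        = Real.log (D.K (σ.symm^[n] ω)) + (-D.lam * n) := by
      field_simp; ring
    rw [harg, Real.exp_add, Real.exp_log (D.K_pos _)]
  have hlim : Tendsto (fun n : ℕ =>
      D.K (σ.symm^[n] ω) * Real.exp (-D.lam * n) * Mf) atTop (nhds 0) := by
    have h5 : Tendsto (fun n : ℕ =>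
        (Real.log (D.K (σ.symm^[n] ω)) / n - D.lam) * n) atTop atBot := by
      apply Filter.Tendsto.neg_mul_atTop (C := -D.lam) (by linarith [D.lam_pos])
      · simpa using h4.sub_const D.lam
      · exact tendsto_natCast_atTop_atTop
    have h6 : Tendsto (fun n : ℕ =>
        D.K (σ.symm^[n] ω) * Real.exp (-D.lam * n)) atTop (nhds 0) := by
      apply Tendsto.congr' _ (Real.tendsto_exp_atBot.comp h5)
      filter_upwards [Filter.eventually_ge_atTop 1] with n hn
      exact (hK n hn).symm
    simpa using h6.mul_const Mf
  have : ‖D.P ω (f ω)‖ ≤ 0 := ge_of_tendsto' hlim hbound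
  exact norm_le_zero_iff.mp this
end

section
/- Suppose a linear cocycle admits a tempered exponential dichotomy with constant K, projections Π^s, Π^u = Id − Π^s, and rate λ > 0, and let f ∈ L^∞(Ω, X) satisfy f(ω) = A(σ^{-1}ω) f(σ^{-1}ω) for ℙ-a.e. ω. Then f = 0 ℙ-a.e. -/
open MeasureTheory Filter

lemma aux_tendsto_exp (c : ℕ → ℝ) (hc : ∀ n, 0 < c n) (lam : ℝ) (hlam : 0 < lam)
    (h : Tendsto (fun n : ℕ => Real.log (c n) / (n : ℝ)) atTop (nhds 0)) :
    Tendsto (fun n : ℕ => c n * Real.exp (-lam * n)) atTop (nhds 0) := by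
  have h1 : Tendsto (fun n : ℕ => Real.log (c n) / (n : ℝ) - lam) atTop (nhds (0 - lam)) :=
    h.sub tendsto_const_nhds
  have h2 : Tendsto (fun n : ℕ => (n : ℝ) * (Real.log (c n) / (n : ℝ) - lam)) atTop atBot :=
    Tendsto.atTop_mul_neg (by linarith) tendsto_natCast_atTop_atTop h1
  have h3 := Real.tendsto_exp_atBot.comp h2
  refine h3.congr' ?_
  filter_upwards [eventually_ge_atTop 1] with n hn
  have hn' : (n : ℝ) ≠ 0 := by
    have : (1 : ℝ) ≤ (n : ℝ) := by exact_mod_cast hn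
    linarith
  have : (n : ℝ) * (Real.log (c n) / (n : ℝ) - lam) = Real.log (c n) + (-lam * n) := by
    field_simp; ring
  simp only [Function.comp_apply, this, Real.exp_add, Real.exp_log (hc n)]

lemma equivar_iter {Ω X : Type*} [NormedAddCommGroup X] [NormedSpace ℝ X]
    (σ : Ω → Ω) (𝒜 : Ω → ℕ → X →L[ℝ] X) (hcoc : IsCocycle σ 𝒜)
    (P : Ω → X →L[ℝ] X)
    (hequiv : ∀ ω, (P (σ ω)).comp (𝒜 ω 1) = (𝒜 ω 1).comp (P ω)) :
    ∀ ω (n : ℕ), (P (σ^[n] ω)).comp (𝒜 ω n) = (𝒜 ω n).comp (P ω) := by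
  intro ω n
  induction n with
  | zero => simp [hcoc.1 ω]
  | succ n ih =>
    have hA : 𝒜 ω (n + 1) = (𝒜 (σ^[n] ω) 1).comp (𝒜 ω n) := by
      have := hcoc.2 ω n 1
      rwa [add_comm 1 n] at this
    have hit : σ^[n + 1] ω = σ (σ^[n] ω) := Function.iterate_succ_apply' σ n ω
    rw [hA, hit, ← ContinuousLinearMap.comp_assoc, hequiv (σ^[n] ω),
      ContinuousLinearMap.comp_assoc, ih, ← ContinuousLinearMap.comp_assoc]

/-- If `f ∈ L^∞(Ω,X)` satisfies the invariance
`f(ω) = A(σ^{-1}ω) f(σ^{-1}ω)` a.e., then `f = 0` a.e. -/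
theorem stmt_8 {Ω X : Type*} [MeasurableSpace Ω]
    [NormedAddCommGroup X] [NormedSpace ℝ X] [CompleteSpace X]
    [MeasurableSpace X] [BorelSpace X]
    (μ : Measure Ω) [IsProbabilityMeasure μ] (σ : Ω ≃ᵐ Ω)
    (hσ : MeasurePreserving σ μ μ) (herg : Ergodic (⇑σ) μ)
    (𝒜 : Ω → ℕ → X →L[ℝ] X) (hcoc : IsCocycle (⇑σ) 𝒜)
    (D : Dichotomy μ σ 𝒜)
    (f : Ω → X) (hfmeas : Measurable f) (Mf : ℝ)
    (hfbdd : ∀ᵐ ω ∂μ, ‖f ω‖ ≤ Mf)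
    (hinv : ∀ᵐ ω ∂μ, f ω = 𝒜 (σ.symm ω) 1 (f (σ.symm ω))) :
    f =ᵐ[μ] 0 := by
  classical
  obtain ⟨ω₀, hω₀⟩ := hfbdd.exists
  have hMf : 0 ≤ Mf := le_trans (norm_nonneg _) hω₀
  have hσ2 : MeasurePreserving (⇑σ.symm) μ μ := hσ.symm σ
  have pull : ∀ (p : Ω → Prop), (∀ᵐ ω ∂μ, p ω) →
      ∀ᵐ ω ∂μ, ∀ k : ℕ, p (σ.symm^[k] ω) := by
    intro p hp
    rw [ae_all_iff]
    intro k
    exact (hσ2.iterate k).quasiMeasurePreserving.ae hp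
  have hret : ∀ (n : ℕ) (ω : Ω), σ^[n] (σ.symm^[n] ω) = ω := fun n ω =>
    Function.LeftInverse.iterate σ.apply_symm_apply n ω
  -- iterated invariance
  have hinv_iter : ∀ᵐ ω ∂μ, ∀ n : ℕ, f ω = 𝒜 (σ.symm^[n] ω) n (f (σ.symm^[n] ω)) := by
    filter_upwards [pull _ hinv] with ω hω
    intro n
    induction n with
    | zero => simp [hcoc.1]
    | succ n ih =>
      have h1 := hω n
      have hs : σ.symm (σ.symm^[n] ω) = σ.symm^[n + 1] ω :=
        (Function.iterate_succ_apply' σ.symm n ω).symm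
      rw [hs] at h1
      have hA : 𝒜 (σ.symm^[n + 1] ω) (n + 1) =
          (𝒜 (σ^[1] (σ.symm^[n + 1] ω)) n).comp (𝒜 (σ.symm^[n + 1] ω) 1) :=
        hcoc.2 (σ.symm^[n + 1] ω) 1 n
      have hσ1 : σ^[1] (σ.symm^[n + 1] ω) = σ.symm^[n] ω := by
        rw [Function.iterate_one, ← hs, MeasurableEquiv.apply_symm_apply]
      rw [hσ1] at hA
      rw [hA]
      calc f ω = 𝒜 (σ.symm^[n] ω) n (f (σ.symm^[n] ω)) := ih
        _ = 𝒜 (σ.symm^[n] ω) n (𝒜 (σ.symm^[n + 1] ω) 1 (f (σ.symm^[n + 1] ω))) := by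
            rw [← h1]
        _ = _ := rfl
  -- limit of the tempered constant along the backward orbit
  have hKlim : ∀ᵐ ω ∂μ, Tendsto
      (fun n : ℕ => D.K (σ.symm^[n] ω) * Real.exp (-D.lam * n) * Mf) atTop (nhds 0) := by
    filter_upwards [D.tempered_neg] with ω hω
    have := aux_tendsto_exp (fun n => D.K (σ.symm^[n] ω)) (fun n => D.K_pos _)
      D.lam D.lam_pos hω
    simpa using this.mul_const Mf
  have hb_sk := pull _ D.bound_s
  have hfbk := pull _ hfbdd
  -- stable part vanishes
  have hPf : ∀ᵐ ω ∂μ, D.P ω (f ω) = 0 := by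
    filter_upwards [hinv_iter, hb_sk, hfbk, hKlim] with ω h1 h2 h3 h4
    have key : ∀ n : ℕ, ‖D.P ω (f ω)‖ ≤
        D.K (σ.symm^[n] ω) * Real.exp (-D.lam * n) * Mf := by
      intro n
      have he := equivar_iter (⇑σ) 𝒜 hcoc D.P D.equivar (σ.symm^[n] ω) n
      rw [hret n ω] at he
      have e1 : D.P ω (f ω) =
          ((𝒜 (σ.symm^[n] ω) n).comp (D.P (σ.symm^[n] ω))) (f (σ.symm^[n] ω)) := by
        calc D.P ω (f ω)
            = ((D.P ω).comp (𝒜 (σ.symm^[n] ω) n)) (f (σ.symm^[n] ω)) := by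
              rw [ContinuousLinearMap.comp_apply, ← h1 n]
          _ = _ := by rw [he]
      rw [e1]
      calc ‖((𝒜 (σ.symm^[n] ω) n).comp (D.P (σ.symm^[n] ω))) (f (σ.symm^[n] ω))‖
          ≤ ‖(𝒜 (σ.symm^[n] ω) n).comp (D.P (σ.symm^[n] ω))‖ * ‖f (σ.symm^[n] ω)‖ :=
            ContinuousLinearMap.le_opNorm _ _
        _ ≤ D.K (σ.symm^[n] ω) * Real.exp (-D.lam * n) * Mf :=
            mul_le_mul (h2 n n) (h3 n) (norm_nonneg _)
              (le_of_lt (mul_pos (D.K_pos _) (Real.exp_pos _)))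
    have h0 : ‖D.P ω (f ω)‖ ≤ 0 := ge_of_tendsto' h4 key
    exact norm_le_zero_iff.mp h0
  have hPfk := pull _ hPf
  -- the norm along the backward orbit tends to zero
  have hbound : ∀ᵐ ω ∂μ, Tendsto (fun n : ℕ => ‖f (σ.symm^[n] ω)‖) atTop (nhds 0) := by
    filter_upwards [hinv_iter, hPfk, hfbdd, D.bound_u, hPf] with ω h1 h2 h3 h4 h5
    have key : ∀ n : ℕ, ‖f (σ.symm^[n] ω)‖ ≤ D.K ω * Real.exp (-D.lam * n) * Mf := by
      intro n
      have idP : (ContinuousLinearMap.id ℝ X - D.P ω) (f ω) = f ω := by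
        simp [ContinuousLinearMap.sub_apply, h5]
      have idPn : (ContinuousLinearMap.id ℝ X - D.P (σ.symm^[n] ω)) (f (σ.symm^[n] ω)) =
          f (σ.symm^[n] ω) := by
        simp [ContinuousLinearMap.sub_apply, h2 n]
      have e1 : ((D.B ω n).comp (ContinuousLinearMap.id ℝ X - D.P ω)) (f ω) =
          f (σ.symm^[n] ω) := by
        have hi := congrArg (fun T : X →L[ℝ] X => T (f (σ.symm^[n] ω))) (D.inv_left ω n)
        simp only [ContinuousLinearMap.comp_apply] at hi
        rw [idPn] at hi
        rw [ContinuousLinearMap.comp_apply, idP, h1 n]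
        exact hi
      rw [← e1]
      calc ‖((D.B ω n).comp (ContinuousLinearMap.id ℝ X - D.P ω)) (f ω)‖
          ≤ ‖(D.B ω n).comp (ContinuousLinearMap.id ℝ X - D.P ω)‖ * ‖f ω‖ :=
            ContinuousLinearMap.le_opNorm _ _
        _ ≤ D.K ω * Real.exp (-D.lam * n) * Mf :=
            mul_le_mul (h4 n) h3 (norm_nonneg _)
              (le_of_lt (mul_pos (D.K_pos _) (Real.exp_pos _)))
    have hb : Tendsto (fun n : ℕ => D.K ω * Real.exp (-D.lam * n) * Mf) atTop (nhds 0) := by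
      have hlog : Tendsto (fun n : ℕ => Real.log (D.K ω) / (n : ℝ)) atTop (nhds 0) :=
        tendsto_const_div_atTop_nhds_zero_nat _
      have := aux_tendsto_exp (fun _ => D.K ω) (fun _ => D.K_pos ω) D.lam D.lam_pos hlog
      simpa using this.mul_const Mf
    exact squeeze_zero (fun n => norm_nonneg _) key hb
  -- Poincaré recurrence: the set where ‖f‖ ≥ 1/(j+1) is null
  have hE : ∀ j : ℕ, ∀ᵐ ω ∂μ, ¬ ((1 : ℝ) / (j + 1) ≤ ‖f ω‖) := by
    intro j
    have hEmeas : MeasurableSet {ω | (1 : ℝ) / (j + 1) ≤ ‖f ω‖} :=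
      measurableSet_le measurable_const hfmeas.norm
    have hrec := hσ2.conservative.ae_mem_imp_frequently_image_mem hEmeas.nullMeasurableSet
    filter_upwards [hrec, hbound] with ω h1 h2
    intro hmem
    have h3 : ∃ᶠ n in atTop, (1 : ℝ) / (j + 1) ≤ ‖f (σ.symm^[n] ω)‖ := h1 hmem
    have h4 : ∀ᶠ n in atTop, ‖f (σ.symm^[n] ω)‖ < (1 : ℝ) / (j + 1) :=
      h2.eventually (gt_mem_nhds (by positivity))
    obtain ⟨n, hn1, hn2⟩ := (h3.and_eventually h4).exists
    exact absurd hn1 (not_le.mpr hn2)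
  filter_upwards [ae_all_iff.2 hE] with ω hω
  show f ω = 0
  by_contra hne
  have hpos : 0 < ‖f ω‖ := norm_pos_iff.mpr hne
  obtain ⟨j, hj⟩ := exists_nat_one_div_lt hpos
  exact hω j (le_of_lt hj)
end

section
/- If a linear cocycle 𝒜 admits a tempered exponential dichotomy, then there exists a tempered random variable C : Ω → (0,∞) such that the pair (L^∞(Ω,X), L^∞_C(Ω,X)) is admissible for 𝒜: for each g ∈ L^∞_C(Ω,X) there exists a unique f ∈ L^∞(Ω,X) with f(ω) − A(σ^{-1}ω) f(σ^{-1}ω) = g(ω) for ℙ-a.e. ω. -/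
open MeasureTheory Filter

/-- Membership in the weighted space `L^∞_C(Ω, X)`: measurable with
`esssup C(ω)‖f(ω)‖ < ∞`. -/
def MemLinfW {Ω X : Type*} [MeasurableSpace Ω] [NormedAddCommGroup X]
    [MeasurableSpace X] (μ : MeasureTheory.Measure Ω) (C : Ω → ℝ) (f : Ω → X) : Prop :=
  Measurable f ∧ ∃ M : ℝ, ∀ᵐ ω ∂μ, C ω * ‖f ω‖ ≤ M

/-- The pair `(L^∞_{C₁}, L^∞_{C₂})` is admissible for the cocycle with generator `A`:
for every `g ∈ L^∞_{C₂}` there is an (a.e.-essentially) unique `f ∈ L^∞_{C₁}` with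
`f(ω) − A(σ^{-1}ω) f(σ^{-1}ω) = g(ω)` a.e. -/
def Admissible {Ω X : Type*} [MeasurableSpace Ω] [NormedAddCommGroup X]
    [NormedSpace ℝ X] [MeasurableSpace X] (μ : MeasureTheory.Measure Ω) (σ : Ω ≃ᵐ Ω)
    (A : Ω → X →L[ℝ] X) (C₁ C₂ : Ω → ℝ) : Prop :=
  ∀ g : Ω → X, MemLinfW μ C₂ g →
    ∃ f : Ω → X,
      (MemLinfW μ C₁ f ∧ ∀ᵐ ω ∂μ, f ω - A (σ.symm ω) (f (σ.symm ω)) = g ω) ∧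
      ∀ f' : Ω → X,
        (MemLinfW μ C₁ f' ∧ ∀ᵐ ω ∂μ, f' ω - A (σ.symm ω) (f' (σ.symm ω)) = g ω) →
        f' =ᵐ[μ] f

/-- A positive random variable `K` is tempered:
`(1/n) log K(σ^{±n} ω) → 0` almost surely. -/
def Tempered {Ω : Type*} [MeasurableSpace Ω] (μ : MeasureTheory.Measure Ω)
    (σ : Ω ≃ᵐ Ω) (K : Ω → ℝ) : Prop :=
  ∀ᵐ ω ∂μ,
    Filter.Tendsto (fun n : ℕ => Real.log (K (σ^[n] ω)) / (n : ℝ))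
      Filter.atTop (nhds 0) ∧
    Filter.Tendsto (fun n : ℕ => Real.log (K (σ.symm^[n] ω)) / (n : ℝ))
      Filter.atTop (nhds 0)

/-!
The solution is the Green's function of the dichotomy,
`f ω = ∑_{n ≥ 0} 𝒜(σ⁻ⁿω, n) P(σ⁻ⁿω) g(σ⁻ⁿω) - ∑_{n ≥ 1} 𝒜(ω, -n) (I - P(σⁿω)) g(σⁿω)`.
With the weight `C = max K 1` one has `K(σ^{∓n}ω) ‖g(σ^{∓n}ω)‖ ≤ ‖g‖_C`, so the `n`-th terms are
bounded by `‖g‖_C e^{-λn}`; the series converge to a bounded `f`, and `f - A(σ⁻¹·) f(σ⁻¹·)`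
telescopes to `P g + (I - P) g = g`. For uniqueness, a bounded solution `h` of the homogeneous
equation satisfies `‖P h(ω)‖ ≤ K(σ⁻ⁿω) e^{-λn} ‖h‖_∞` and `‖(I - P) h(ω)‖ ≤ K(σⁿω) e^{-λn} ‖h‖_∞`
for every `n`, and both bounds tend to `0` because `K` is tempered.
-/

section Measurability

variable {Ω X Y : Type*} [MeasurableSpace Ω]
  [NormedAddCommGroup X] [MeasurableSpace X] [BorelSpace X] [SecondCountableTopology X]

theorem exists_measurable_ae_eq_tsum {μ : Measure Ω} {u : ℕ → Ω → X}
    (hu : ∀ n, Measurable (u n)) (hsum : ∀ᵐ ω ∂μ, Summable fun n => u n ω) :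
    ∃ f : Ω → X, Measurable f ∧ ∀ᵐ ω ∂μ, f ω = ∑' n, u n ω := by
  obtain ⟨f, hf, hlim⟩ := measurable_limit_of_tendsto_metrizable_ae
    (fun N => (Finset.measurable_sum (Finset.range N) fun n _ => hu n).aemeasurable)
    (hsum.mono fun ω h => ⟨_, h.hasSum.tendsto_sum_nat⟩)
  refine ⟨f, hf, ?_⟩
  filter_upwards [hsum, hlim] with ω hs hl
  exact tendsto_nhds_unique hl hs.hasSum.tendsto_sum_nat

variable [NormedSpace ℝ X]
  [NormedAddCommGroup Y] [NormedSpace ℝ Y] [MeasurableSpace Y] [BorelSpace Y]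

theorem measurable_clm_apply_of_forall {T : Ω → X →L[ℝ] Y}
    (hT : ∀ x, Measurable fun ω => T ω x) {v : Ω → X} (hv : Measurable v) :
    Measurable fun ω => T ω (v ω) :=
  (measurable_uncurry_of_continuous_of_measurable (u := fun x ω => T ω x)
    (fun ω => (T ω).continuous) hT).comp (hv.prodMk measurable_id)

/-- `y` is recovered as the limit of `d (m k ω)`, where `m k ω` is the first index of a dense
sequence `d` with `‖T ω (d m) - T ω (y ω)‖ < 1 / (k + 1)`; the left inverse `R` (of which no
measurability is needed) turns this into convergence in `X`. -/
theorem measurable_of_measurable_clm_apply_of_leftInverse [SecondCountableTopology Y]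
    {T : Ω → X →L[ℝ] Y} (hT : ∀ x, Measurable fun ω => T ω x) {R : Ω → Y →L[ℝ] X}
    (hR : ∀ ω x, R ω (T ω x) = x) {y : Ω → X} (hy : Measurable fun ω => T ω (y ω)) :
    Measurable y := by
  classical
  have : Nonempty X := ⟨0⟩
  obtain ⟨d, hd⟩ := TopologicalSpace.exists_dense_seq X
  have hex : ∀ ω (k : ℕ), ∃ m, ‖T ω (d m) - T ω (y ω)‖ < 1 / ((k : ℝ) + 1) := fun ω k =>
    hd.exists_mem_open (s := {x | ‖T ω x - T ω (y ω)‖ < 1 / ((k : ℝ) + 1)})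
      (isOpen_lt (by fun_prop) continuous_const) ⟨y ω, by simp; positivity⟩
  have hmeas : ∀ k, Measurable fun ω => d (Nat.find (hex ω k)) := fun k =>
    measurable_from_nat.comp <| measurable_find (fun ω => hex ω k) fun m =>
      measurableSet_lt ((hT (d m)).sub hy).norm measurable_const
  refine measurable_of_tendsto_metrizable hmeas (tendsto_pi_nhds.2 fun ω => ?_)
  have hclose : ∀ k : ℕ, ‖d (Nat.find (hex ω k)) - y ω‖ ≤ ‖R ω‖ * (1 / ((k : ℝ) + 1)) := by
    intro k
    calc ‖d (Nat.find (hex ω k)) - y ω‖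
        = ‖R ω (T ω (d (Nat.find (hex ω k))) - T ω (y ω))‖ := by rw [map_sub, hR, hR]
      _ ≤ ‖R ω‖ * (1 / ((k : ℝ) + 1)) :=
        (R ω).le_of_opNorm_le_of_le le_rfl (Nat.find_spec (hex ω k)).le
  have hlim := tendsto_one_div_add_atTop_nhds_zero_nat.const_mul ‖R ω‖
  rw [mul_zero] at hlim
  simpa using (squeeze_zero_norm hclose hlim).add_const (y ω)

end Measurability

theorem tendsto_mul_exp_neg_mul_of_tendsto_log_div {u : ℕ → ℝ} (hu : ∀ n, 0 < u n)
    (ht : Tendsto (fun n : ℕ => Real.log (u n) / n) atTop (nhds 0)) {lam : ℝ} (hlam : 0 < lam) :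
    Tendsto (fun n : ℕ => u n * Real.exp (-lam * n)) atTop (nhds 0) := by
  have hexp : Tendsto (fun n : ℕ => (Real.log (u n) / n - lam) * n) atTop atBot := by
    refine Tendsto.neg_mul_atTop (C := -lam) (by linarith) ?_ tendsto_natCast_atTop_atTop
    simpa using ht.sub_const lam
  refine (Real.tendsto_exp_atBot.comp hexp).congr' ?_
  filter_upwards [eventually_ne_atTop 0] with n hn
  have hn' : (n : ℝ) ≠ 0 := Nat.cast_ne_zero.2 hn
  rw [Function.comp_apply, sub_mul, div_mul_cancel₀ _ hn', sub_eq_add_neg, Real.exp_add,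
    Real.exp_log (hu n), neg_mul]

theorem tendsto_log_max_one_div {u : ℕ → ℝ}
    (ht : Tendsto (fun n : ℕ => Real.log (u n) / n) atTop (nhds 0)) :
    Tendsto (fun n : ℕ => Real.log (max (u n) 1) / n) atTop (nhds 0) := by
  have habs : ∀ a : ℝ, |Real.log (max a 1)| ≤ |Real.log a| := fun a => by
    rcases le_total a 1 with h | h
    · simp [max_eq_right h]
    · rw [max_eq_left h]
  refine squeeze_zero_norm (fun n => ?_) (by simpa using ht.norm)
  simp only [Real.norm_eq_abs, abs_div, Nat.abs_cast]
  exact div_le_div_of_nonneg_right (habs _) n.cast_nonneg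

theorem MeasureTheory.MeasurePreserving.ae_forall_iterate {α : Type*} [MeasurableSpace α]
    {μ : Measure α} {f : α → α} (hf : MeasurePreserving f μ μ) {p : α → Prop}
    (hp : ∀ᵐ x ∂μ, p x) : ∀ᵐ x ∂μ, ∀ n, p (f^[n] x) :=
  ae_all_iff.2 fun n => (hf.iterate n).quasiMeasurePreserving.ae hp

namespace MeasurableEquiv

variable {Ω : Type*} [MeasurableSpace Ω] (σ : Ω ≃ᵐ Ω)

@[simp]
theorem iterate_apply_iterate_symm (n : ℕ) (ω : Ω) : σ^[n] (σ.symm^[n] ω) = ω :=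
  (Function.LeftInverse.iterate σ.apply_symm_apply n) ω

@[simp]
theorem iterate_symm_iterate_apply (n : ℕ) (ω : Ω) : σ.symm^[n] (σ^[n] ω) = ω :=
  (Function.LeftInverse.iterate σ.symm_apply_apply n) ω

theorem apply_iterate_symm_succ (n : ℕ) (ω : Ω) : σ (σ.symm^[n + 1] ω) = σ.symm^[n] ω := by
  rw [Function.iterate_succ_apply', apply_symm_apply]

end MeasurableEquiv

namespace IsCocycle

variable {Ω X : Type*} [NormedAddCommGroup X] [NormedSpace ℝ X]
  {σ : Ω → Ω} {𝒜 : Ω → ℕ → X →L[ℝ] X}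

theorem zero_apply (h𝒜 : IsCocycle σ 𝒜) (ω : Ω) (v : X) : 𝒜 ω 0 v = v := by
  rw [h𝒜.1]; rfl

theorem succ_apply (h𝒜 : IsCocycle σ 𝒜) (ω : Ω) (n : ℕ) (v : X) :
    𝒜 ω (n + 1) v = 𝒜 (σ^[n] ω) 1 (𝒜 ω n v) := by
  rw [add_comm, h𝒜.2]; rfl

theorem succ_apply' (h𝒜 : IsCocycle σ 𝒜) (ω : Ω) (n : ℕ) (v : X) :
    𝒜 ω (n + 1) v = 𝒜 (σ ω) n (𝒜 ω 1 v) := by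
  rw [h𝒜.2, Function.iterate_one]; rfl

theorem apply_iterate_of_forall (h𝒜 : IsCocycle σ 𝒜) {v : Ω → X} {ω : Ω}
    (hv : ∀ k, v (σ (σ^[k] ω)) = 𝒜 (σ^[k] ω) 1 (v (σ^[k] ω))) (n : ℕ) :
    v (σ^[n] ω) = 𝒜 ω n (v ω) := by
  induction n with
  | zero => rw [Function.iterate_zero_apply, h𝒜.zero_apply]
  | succ n ih => rw [Function.iterate_succ_apply', hv, ih, ← h𝒜.succ_apply]

theorem measurable_apply [MeasurableSpace Ω] [MeasurableSpace X] [BorelSpace X]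
    [SecondCountableTopology X] (h𝒜 : IsCocycle σ 𝒜) (hσ : Measurable σ)
    (hmeas : ∀ x, Measurable fun ω => 𝒜 ω 1 x) (n : ℕ) (x : X) :
    Measurable fun ω => 𝒜 ω n x := by
  induction n generalizing x with
  | zero => simp only [h𝒜.zero_apply, measurable_const]
  | succ n ih =>
    simpa only [← h𝒜.succ_apply'] using
      measurable_clm_apply_of_forall (fun y => (ih y).comp hσ) (hmeas x)

end IsCocycle

namespace Dichotomy

variable {Ω X : Type*} [MeasurableSpace Ω] [NormedAddCommGroup X] [NormedSpace ℝ X]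
  [MeasurableSpace X] [BorelSpace X] {μ : Measure Ω} {σ : Ω ≃ᵐ Ω} {𝒜 : Ω → ℕ → X →L[ℝ] X}

section

variable (D : Dichotomy μ σ 𝒜)

theorem P_P_apply (ω : Ω) (v : X) : D.P ω (D.P ω v) = D.P ω v :=
  DFunLike.congr_fun (D.idem ω) v

theorem P_generator_apply (ω : Ω) (v : X) : D.P (σ ω) (𝒜 ω 1 v) = 𝒜 ω 1 (D.P ω v) :=
  DFunLike.congr_fun (D.equivar ω) v

theorem cocycle_B_apply (ω : Ω) (n : ℕ) (v : X) :
    𝒜 (σ.symm^[n] ω) n (D.B ω n (v - D.P ω v)) = v - D.P ω v := by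
  simpa using DFunLike.congr_fun (D.inv_right ω n) v

theorem B_cocycle_apply (ω : Ω) (n : ℕ) (v : X) :
    D.B ω n (𝒜 (σ.symm^[n] ω) n (v - D.P (σ.symm^[n] ω) v)) = v - D.P (σ.symm^[n] ω) v := by
  simpa using DFunLike.congr_fun (D.inv_left ω n) v

theorem P_B_apply (ω : Ω) (n : ℕ) (v : X) : D.P (σ.symm^[n] ω) (D.B ω n (v - D.P ω v)) = 0 := by
  simpa using DFunLike.congr_fun (D.B_ker ω n) v

theorem P_cocycle_apply (h𝒜 : IsCocycle σ 𝒜) (ω : Ω) (n : ℕ) (v : X) :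
    D.P (σ^[n] ω) (𝒜 ω n v) = 𝒜 ω n (D.P ω v) := by
  induction n with
  | zero => simp only [Function.iterate_zero_apply, h𝒜.zero_apply]
  | succ n ih => rw [Function.iterate_succ_apply', h𝒜.succ_apply, P_generator_apply, ih,
      ← h𝒜.succ_apply]

theorem B_zero_apply (h𝒜 : IsCocycle σ 𝒜) (ω : Ω) (v : X) :
    D.B ω 0 (v - D.P ω v) = v - D.P ω v := by
  simpa only [h𝒜.zero_apply] using D.cocycle_B_apply ω 0 v

theorem eq_of_P_eq_of_cocycle_eq {ω : Ω} {n : ℕ} {x x' : X}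
    (hP : D.P (σ.symm^[n] ω) x = D.P (σ.symm^[n] ω) x')
    (h𝒜 : 𝒜 (σ.symm^[n] ω) n x = 𝒜 (σ.symm^[n] ω) n x') : x = x' := by
  have hPz : D.P (σ.symm^[n] ω) (x - x') = 0 := by rw [map_sub, hP, sub_self]
  have h𝒜z : 𝒜 (σ.symm^[n] ω) n (x - x') = 0 := by rw [map_sub, h𝒜, sub_self]
  have h := D.B_cocycle_apply ω n (x - x')
  rw [hPz, sub_zero, h𝒜z, map_zero] at h
  exact sub_eq_zero.1 h.symm

theorem generator_B_succ_apply (h𝒜 : IsCocycle σ 𝒜) (ω : Ω) (n : ℕ) (v : X) :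
    𝒜 (σ.symm^[n + 1] ω) 1 (D.B ω (n + 1) (v - D.P ω v)) = D.B ω n (v - D.P ω v) := by
  refine D.eq_of_P_eq_of_cocycle_eq (ω := ω) (n := n) ?_ ?_
  · have h := D.P_generator_apply (σ.symm^[n + 1] ω) (D.B ω (n + 1) (v - D.P ω v))
    rw [σ.apply_iterate_symm_succ] at h
    rw [h, P_B_apply, map_zero, P_B_apply]
  · have h := h𝒜.succ_apply' (σ.symm^[n + 1] ω) n (D.B ω (n + 1) (v - D.P ω v))
    rw [σ.apply_iterate_symm_succ] at h
    rw [← h, cocycle_B_apply, cocycle_B_apply]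

def stableTerm (g : Ω → X) (n : ℕ) (ω : Ω) : X :=
  𝒜 (σ.symm^[n] ω) n (D.P (σ.symm^[n] ω) (g (σ.symm^[n] ω)))

def unstableTerm (g : Ω → X) (n : ℕ) (ω : Ω) : X :=
  D.B (σ^[n] ω) n (g (σ^[n] ω) - D.P (σ^[n] ω) (g (σ^[n] ω)))

/-- Junk value where either series diverges. -/
noncomputable def greenSum (g : Ω → X) (ω : Ω) : X :=
  ∑' n, D.stableTerm g n ω - ∑' n, D.unstableTerm g (n + 1) ω

variable {D}

theorem stableTerm_zero (h𝒜 : IsCocycle σ 𝒜) (g : Ω → X) (ω : Ω) :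
    D.stableTerm g 0 ω = D.P ω (g ω) :=
  h𝒜.zero_apply _ _

theorem unstableTerm_zero (h𝒜 : IsCocycle σ 𝒜) (g : Ω → X) (ω : Ω) :
    D.unstableTerm g 0 ω = g ω - D.P ω (g ω) :=
  D.B_zero_apply h𝒜 ω (g ω)

theorem generator_stableTerm (h𝒜 : IsCocycle σ 𝒜) (g : Ω → X) (n : ℕ) (ω : Ω) :
    𝒜 (σ.symm ω) 1 (D.stableTerm g n (σ.symm ω)) = D.stableTerm g (n + 1) ω := by
  rw [stableTerm, stableTerm, Function.iterate_succ_apply,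
    h𝒜.succ_apply (σ.symm^[n] (σ.symm ω)) n, σ.iterate_apply_iterate_symm]

theorem generator_unstableTerm (h𝒜 : IsCocycle σ 𝒜) (g : Ω → X) (n : ℕ) (ω : Ω) :
    𝒜 (σ.symm ω) 1 (D.unstableTerm g (n + 1) (σ.symm ω)) = D.unstableTerm g n ω := by
  have h := D.generator_B_succ_apply h𝒜 (σ^[n] ω) n (g (σ^[n] ω))
  rw [Function.iterate_succ_apply', σ.iterate_symm_iterate_apply] at h
  rw [unstableTerm, unstableTerm, Function.iterate_succ_apply, σ.apply_symm_apply, h]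

theorem greenSum_sub_generator_greenSum (h𝒜 : IsCocycle σ 𝒜) {g : Ω → X} {ω : Ω}
    (hS : Summable (D.stableTerm g · ω)) (hU : Summable (D.unstableTerm g · ω))
    (hS' : Summable (D.stableTerm g · (σ.symm ω)))
    (hU' : Summable (D.unstableTerm g · (σ.symm ω))) :
    D.greenSum g ω - 𝒜 (σ.symm ω) 1 (D.greenSum g (σ.symm ω)) = g ω := by
  rw [greenSum, greenSum, map_sub, (𝒜 (σ.symm ω) 1).map_tsum hS',
    (𝒜 (σ.symm ω) 1).map_tsum ((summable_nat_add_iff 1).2 hU')]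
  simp only [generator_stableTerm h𝒜, generator_unstableTerm h𝒜]
  rw [hS.tsum_eq_zero_add, hU.tsum_eq_zero_add, stableTerm_zero h𝒜, unstableTerm_zero h𝒜]
  abel

section Measurability

variable [SecondCountableTopology X]

theorem measurable_stableTerm (h𝒜 : IsCocycle σ 𝒜) (hmeas : ∀ x, Measurable fun ω => 𝒜 ω 1 x)
    {g : Ω → X} (hg : Measurable g) (n : ℕ) : Measurable (D.stableTerm g n) := by
  have hτ : Measurable (σ.symm^[n]) := σ.symm.measurable.iterate n
  exact measurable_clm_apply_of_forall
    (fun x => (h𝒜.measurable_apply σ.measurable hmeas n x).comp hτ)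
    (measurable_clm_apply_of_forall (fun x => (D.P_meas x).comp hτ) (hg.comp hτ))

/-- `B` carries no measurability assumption: `unstableTerm g n ω` is instead recovered from
`(𝒜(ω, n) (I - P ω), P ω)`, which has the left inverse `(u, v) ↦ 𝒜(σⁿω, -n) u + v`. -/
theorem measurable_unstableTerm (h𝒜 : IsCocycle σ 𝒜)
    (hmeas : ∀ x, Measurable fun ω => 𝒜 ω 1 x) {g : Ω → X} (hg : Measurable g) (n : ℕ) :
    Measurable (D.unstableTerm g n) := by
  have hτ : Measurable (σ^[n]) := σ.measurable.iterate n
  have hP : ∀ ω, D.P ω (D.unstableTerm g n ω) = 0 := fun ω => by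
    have h := D.P_B_apply (σ^[n] ω) n (g (σ^[n] ω))
    rwa [σ.iterate_symm_iterate_apply] at h
  have h𝒜y : ∀ ω, 𝒜 ω n (D.unstableTerm g n ω) = g (σ^[n] ω) - D.P (σ^[n] ω) (g (σ^[n] ω)) :=
    fun ω => by
      have h := D.cocycle_B_apply (σ^[n] ω) n (g (σ^[n] ω))
      rwa [σ.iterate_symm_iterate_apply] at h
  refine measurable_of_measurable_clm_apply_of_leftInverse
    (T := fun ω => ((𝒜 ω n).comp (ContinuousLinearMap.id ℝ X - D.P ω)).prod (D.P ω))
    (R := fun ω => ((D.B (σ^[n] ω) n).comp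
      (ContinuousLinearMap.id ℝ X - D.P (σ^[n] ω))).coprod (ContinuousLinearMap.id ℝ X))
    (fun x => ?_) (fun ω x => ?_) ?_
  · simp only [ContinuousLinearMap.prod_apply, ContinuousLinearMap.comp_apply,
      sub_apply, ContinuousLinearMap.id_apply]
    exact (measurable_clm_apply_of_forall (h𝒜.measurable_apply σ.measurable hmeas n)
      (measurable_const.sub (D.P_meas x))).prodMk (D.P_meas x)
  · have hB := D.B_cocycle_apply (σ^[n] ω) n x
    rw [σ.iterate_symm_iterate_apply] at hB
    simp only [ContinuousLinearMap.coprod_apply, ContinuousLinearMap.prod_apply,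
      ContinuousLinearMap.comp_apply, sub_apply,
      ContinuousLinearMap.id_apply]
    rw [D.P_cocycle_apply h𝒜, map_sub (D.P ω), P_P_apply, sub_self, map_zero, sub_zero, hB,
      sub_add_cancel]
  · simp only [ContinuousLinearMap.prod_apply, ContinuousLinearMap.comp_apply,
      sub_apply, ContinuousLinearMap.id_apply, hP, sub_zero, h𝒜y]
    exact ((hg.comp hτ).sub (measurable_clm_apply_of_forall (fun x => (D.P_meas x).comp hτ)
      (hg.comp hτ))).prodMk measurable_const

end Measurability

theorem ae_norm_stableTerm_le (hσ : MeasurePreserving σ μ μ) {g : Ω → X} {M : ℝ}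
    (hgM : ∀ᵐ ω ∂μ, D.K ω * ‖g ω‖ ≤ M) :
    ∀ᵐ ω ∂μ, ∀ n : ℕ, ‖D.stableTerm g n ω‖ ≤ M * Real.exp (-D.lam * n) := by
  filter_upwards [(hσ.symm σ).ae_forall_iterate (D.bound_s.and hgM)] with ω h n
  have hn := ContinuousLinearMap.le_of_opNorm_le _ ((h n).1 n) (g (σ.symm^[n] ω))
  have := mul_le_mul_of_nonneg_left (h n).2 (Real.exp_nonneg (-D.lam * n))
  exact hn.trans (by nlinarith)

theorem ae_norm_unstableTerm_le (hσ : MeasurePreserving σ μ μ) {g : Ω → X} {M : ℝ}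
    (hgM : ∀ᵐ ω ∂μ, D.K ω * ‖g ω‖ ≤ M) :
    ∀ᵐ ω ∂μ, ∀ n : ℕ, ‖D.unstableTerm g n ω‖ ≤ M * Real.exp (-D.lam * n) := by
  filter_upwards [hσ.ae_forall_iterate (D.bound_u.and hgM)] with ω h n
  have hn := ContinuousLinearMap.le_of_opNorm_le _ ((h n).1 n) (g (σ^[n] ω))
  have := mul_le_mul_of_nonneg_left (h n).2 (Real.exp_nonneg (-D.lam * n))
  exact hn.trans (by nlinarith)

end

theorem exists_bounded_solution [CompleteSpace X] [SecondCountableTopology X]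
    (D : Dichotomy μ σ 𝒜) (hσ : MeasurePreserving σ μ μ) (h𝒜 : IsCocycle σ 𝒜)
    (hmeas : ∀ x, Measurable fun ω => 𝒜 ω 1 x) {g : Ω → X} (hg : Measurable g) {M : ℝ}
    (hgM : ∀ᵐ ω ∂μ, D.K ω * ‖g ω‖ ≤ M) :
    ∃ f, MemLinfW μ (fun _ => 1) f ∧
      ∀ᵐ ω ∂μ, f ω - 𝒜 (σ.symm ω) 1 (f (σ.symm ω)) = g ω := by
  set c : ℕ → ℝ := fun n => max M 0 * Real.exp (-D.lam * n)
  have hc : Summable c := by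
    refine ((Real.summable_exp_nat_mul_iff.2 (neg_lt_zero.2 D.lam_pos)).mul_left
      (max M 0)).congr fun n => ?_
    rw [mul_comm (n : ℝ)]
  have hgM' : ∀ᵐ ω ∂μ, D.K ω * ‖g ω‖ ≤ max M 0 := hgM.mono fun ω h => h.trans (le_max_left _ _)
  have hS := ae_norm_stableTerm_le hσ hgM'
  have hU := ae_norm_unstableTerm_le hσ hgM'
  have hSsum : ∀ᵐ ω ∂μ, Summable (D.stableTerm g · ω) := hS.mono fun ω h => hc.of_norm_bounded h
  have hUsum : ∀ᵐ ω ∂μ, Summable (D.unstableTerm g · ω) :=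
    hU.mono fun ω h => hc.of_norm_bounded h
  obtain ⟨fs, hfs, hfs_eq⟩ := exists_measurable_ae_eq_tsum
    (measurable_stableTerm h𝒜 hmeas hg) hSsum
  obtain ⟨fu, hfu, hfu_eq⟩ := exists_measurable_ae_eq_tsum
    (u := fun n => D.unstableTerm g (n + 1)) (fun n => measurable_unstableTerm h𝒜 hmeas hg _)
    (hUsum.mono fun ω h => (summable_nat_add_iff (f := (D.unstableTerm g · ω)) 1).2 h)
  have hf_eq : ∀ᵐ ω ∂μ, (fs - fu) ω = D.greenSum g ω := by
    filter_upwards [hfs_eq, hfu_eq] with ω h1 h2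
    rw [Pi.sub_apply, h1, h2, greenSum]
  refine ⟨fs - fu, ⟨hfs.sub hfu, ∑' n, c n + ∑' n, c (n + 1), ?_⟩, ?_⟩
  · filter_upwards [hS, hU, hf_eq] with ω hSω hUω hω
    rw [one_mul, hω, greenSum]
    exact (norm_sub_le _ _).trans (add_le_add (tsum_of_norm_bounded hc.hasSum hSω)
      (tsum_of_norm_bounded ((summable_nat_add_iff 1).2 hc).hasSum fun n => hUω (n + 1)))
  · have hσ' := (hσ.symm σ).quasiMeasurePreserving
    filter_upwards [hSsum, hUsum, hσ'.ae hSsum, hσ'.ae hUsum, hf_eq, hσ'.ae hf_eq]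
      with ω hSω hUω hSω' hUω' hω hω'
    rw [hω, hω']
    exact greenSum_sub_generator_greenSum h𝒜 hSω hUω hSω' hUω'

theorem norm_P_cocycle_apply_le (D : Dichotomy μ σ 𝒜) (h𝒜 : IsCocycle σ 𝒜) {ω : Ω} {n : ℕ} {k : ℝ}
    (hk : ‖(𝒜 (σ.symm^[n] ω) n).comp (D.P (σ.symm^[n] ω))‖ ≤ k) (v : X) :
    ‖D.P ω (𝒜 (σ.symm^[n] ω) n v)‖ ≤ k * ‖v‖ := by
  have h := D.P_cocycle_apply h𝒜 (σ.symm^[n] ω) n v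
  rw [σ.iterate_apply_iterate_symm] at h
  rw [h]
  exact ContinuousLinearMap.le_of_opNorm_le _ hk v

theorem norm_sub_P_le (D : Dichotomy μ σ 𝒜) (h𝒜 : IsCocycle σ 𝒜) {ω : Ω} {n : ℕ} {k : ℝ}
    (hk : ‖(D.B (σ^[n] ω) n).comp (ContinuousLinearMap.id ℝ X - D.P (σ^[n] ω))‖ ≤ k) (v : X) :
    ‖v - D.P ω v‖ ≤ k * ‖𝒜 ω n v‖ := by
  have hB := D.B_cocycle_apply (σ^[n] ω) n v
  rw [σ.iterate_symm_iterate_apply] at hB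
  have h : v - D.P ω v =
      ((D.B (σ^[n] ω) n).comp (ContinuousLinearMap.id ℝ X - D.P (σ^[n] ω))) (𝒜 ω n v) := by
    rw [ContinuousLinearMap.comp_apply, sub_apply, ContinuousLinearMap.id_apply,
      D.P_cocycle_apply h𝒜, ← map_sub, hB]
  rw [h]
  exact ContinuousLinearMap.le_of_opNorm_le _ hk _

theorem ae_eq_zero_of_bounded_of_invariant (D : Dichotomy μ σ 𝒜) (hσ : MeasurePreserving σ μ μ)
    (h𝒜 : IsCocycle σ 𝒜) {h : Ω → X} {R : ℝ} (hR : ∀ᵐ ω ∂μ, ‖h ω‖ ≤ R)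
    (hinv : ∀ᵐ ω ∂μ, h ω = 𝒜 (σ.symm ω) 1 (h (σ.symm ω))) : h =ᵐ[μ] 0 := by
  have hσ' := hσ.symm σ
  have hstep : ∀ᵐ ω ∂μ, ∀ k, h (σ (σ^[k] ω)) = 𝒜 (σ^[k] ω) 1 (h (σ^[k] ω)) :=
    hσ.ae_forall_iterate (by simpa using hσ.quasiMeasurePreserving.ae hinv)
  filter_upwards [hstep, hσ'.ae_forall_iterate hstep, hσ.ae_forall_iterate (D.bound_u.and hR),
    hσ'.ae_forall_iterate (D.bound_s.and hR), D.tempered_pos, D.tempered_neg]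
    with ω hfwd hbwd hu hs hpos hneg
  have hKe : ∀ ω' (n : ℕ), 0 ≤ D.K ω' * Real.exp (-D.lam * n) :=
    fun ω' n => mul_nonneg (D.K_pos ω').le (Real.exp_nonneg _)
  have hle : ∀ n : ℕ, ‖h ω‖ ≤ (D.K (σ.symm^[n] ω) * Real.exp (-D.lam * n) +
      D.K (σ^[n] ω) * Real.exp (-D.lam * n)) * R := by
    intro n
    have hback : h ω = 𝒜 (σ.symm^[n] ω) n (h (σ.symm^[n] ω)) := by
      simpa using h𝒜.apply_iterate_of_forall (hbwd n) n
    have hforw : 𝒜 ω n (h ω) = h (σ^[n] ω) := (h𝒜.apply_iterate_of_forall hfwd n).symm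
    have hstable : ‖D.P ω (h ω)‖ ≤ D.K (σ.symm^[n] ω) * Real.exp (-D.lam * n) * R := by
      conv_lhs => rw [hback]
      exact (D.norm_P_cocycle_apply_le h𝒜 ((hs n).1 n) _).trans
        (mul_le_mul_of_nonneg_left (hs n).2 (hKe _ n))
    have hunstable : ‖h ω - D.P ω (h ω)‖ ≤ D.K (σ^[n] ω) * Real.exp (-D.lam * n) * R := by
      refine (D.norm_sub_P_le h𝒜 ((hu n).1 n) _).trans ?_
      rw [hforw]
      exact mul_le_mul_of_nonneg_left (hu n).2 (hKe _ n)
    calc ‖h ω‖ = ‖D.P ω (h ω) + (h ω - D.P ω (h ω))‖ := by rw [add_sub_cancel]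
      _ ≤ ‖D.P ω (h ω)‖ + ‖h ω - D.P ω (h ω)‖ := norm_add_le _ _
      _ ≤ _ := by linarith
  have hlim := ((tendsto_mul_exp_neg_mul_of_tendsto_log_div (fun _ => D.K_pos _) hneg
    D.lam_pos).add (tendsto_mul_exp_neg_mul_of_tendsto_log_div (fun _ => D.K_pos _) hpos
    D.lam_pos)).mul_const R
  rw [add_zero, zero_mul] at hlim
  exact norm_le_zero_iff.1 (ge_of_tendsto' hlim hle)

theorem ae_eq_of_bounded_solutions (D : Dichotomy μ σ 𝒜) (hσ : MeasurePreserving σ μ μ)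
    (h𝒜 : IsCocycle σ 𝒜)
    {f f' g : Ω → X} (hf : MemLinfW μ (fun _ => 1) f) (hf' : MemLinfW μ (fun _ => 1) f')
    (hfg : ∀ᵐ ω ∂μ, f ω - 𝒜 (σ.symm ω) 1 (f (σ.symm ω)) = g ω)
    (hf'g : ∀ᵐ ω ∂μ, f' ω - 𝒜 (σ.symm ω) 1 (f' (σ.symm ω)) = g ω) : f' =ᵐ[μ] f := by
  obtain ⟨-, M, hM⟩ := hf
  obtain ⟨-, M', hM'⟩ := hf'
  have hzero := D.ae_eq_zero_of_bounded_of_invariant hσ h𝒜 (h := f' - f) (R := M' + M)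
    (by
      filter_upwards [hM, hM'] with ω h h'
      rw [one_mul] at h h'
      exact (norm_sub_le _ _).trans (add_le_add h' h))
    (by
      filter_upwards [hfg, hf'g] with ω h h'
      rw [Pi.sub_apply, Pi.sub_apply, map_sub]
      linear_combination (norm := module) h' - h)
  filter_upwards [hzero] with ω h
  exact sub_eq_zero.1 h

theorem tempered_max_one (D : Dichotomy μ σ 𝒜) : Tempered μ σ fun ω => max (D.K ω) 1 := by
  filter_upwards [D.tempered_pos, D.tempered_neg] with ω hpos hneg
  exact ⟨tendsto_log_max_one_div hpos, tendsto_log_max_one_div hneg⟩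

end Dichotomy

theorem stmt_9_general {Ω X : Type*} [MeasurableSpace Ω]
    [NormedAddCommGroup X] [NormedSpace ℝ X] [CompleteSpace X]
    [MeasurableSpace X] [BorelSpace X] [TopologicalSpace.SeparableSpace X]
    (μ : Measure Ω) (σ : Ω ≃ᵐ Ω)
    (hσ : MeasurePreserving σ μ μ)
    (𝒜 : Ω → ℕ → X →L[ℝ] X) (hcoc : IsCocycle (⇑σ) 𝒜)
    (hmeas : ∀ x : X, Measurable fun ω => 𝒜 ω 1 x)
    (D : Dichotomy μ σ 𝒜) :
    ∃ C : Ω → ℝ, Measurable C ∧ (∀ ω, 0 < C ω) ∧ Tempered μ σ C ∧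
      Admissible μ σ (fun ω => 𝒜 ω 1) (fun _ => 1) C := by
  refine ⟨fun ω => max (D.K ω) 1, D.K_meas.max measurable_const,
    fun ω => lt_max_of_lt_right one_pos, D.tempered_max_one, ?_⟩
  rintro g ⟨hg, M, hgM⟩
  have hKg : ∀ᵐ ω ∂μ, D.K ω * ‖g ω‖ ≤ M := hgM.mono fun ω h =>
    (mul_le_mul_of_nonneg_right (le_max_left _ _) (norm_nonneg _)).trans h
  obtain ⟨f, hf, hfg⟩ := D.exists_bounded_solution hσ hcoc hmeas hg hKg
  exact ⟨f, ⟨hf, hfg⟩, fun f' ⟨hf', hf'g⟩ =>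
    D.ae_eq_of_bounded_solutions hσ hcoc hf hf' hfg hf'g⟩

/-- If a linear cocycle admits a tempered exponential dichotomy, then
there is a tempered random variable `C > 0` such that the pair
`(L^∞(Ω,X), L^∞_C(Ω,X))` is admissible for the cocycle. -/
theorem stmt_9 {Ω X : Type*} [MeasurableSpace Ω]
    [NormedAddCommGroup X] [NormedSpace ℝ X] [CompleteSpace X]
    [MeasurableSpace X] [BorelSpace X] [TopologicalSpace.SeparableSpace X]
    (μ : Measure Ω) [IsProbabilityMeasure μ] (σ : Ω ≃ᵐ Ω)
    (hσ : MeasurePreserving σ μ μ) (herg : Ergodic (⇑σ) μ)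
    (𝒜 : Ω → ℕ → X →L[ℝ] X) (hcoc : IsCocycle (⇑σ) 𝒜)
    (hmeas : ∀ x : X, Measurable fun ω => 𝒜 ω 1 x)
    (D : Dichotomy μ σ 𝒜) :
    ∃ C : Ω → ℝ, Measurable C ∧ (∀ ω, 0 < C ω) ∧ Tempered μ σ C ∧
      Admissible μ σ (fun ω => 𝒜 ω 1) (fun _ => 1) C :=
  stmt_9_general μ σ hσ 𝒜 hcoc hmeas D
end
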